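/- For any function f : {-1,1}^n → {-1,1} and p ∈ (0,1), the score of coordinate i satisfies Score_i(f,p) = (p/2) · E_{x,y}[D_i f(x) · D_i f(y)], where y is a p-noisy copy of x and D_i f is the i-th discrete derivative of f. -/

import Mathlib

open Finset

attribute [local instance] Classical.propDecidable

namespace DTR

noncomputable section

/-- ±1 real value of a Boolean. -/
def toR (b : Bool) : ℝ := if b then 1 else -1

/-- Average (expectation under the uniform distribution) of a real-valued
function on `{-1,1}^n` (encoded as `Fin n → Bool`). -/
def avg (n : ℕ) (g : (Fin n → Bool) → ℝ) : ℝ := (∑ x : Fin n → Bool, g x) / 2 ^ n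

/-- Mean `E[f]` of a ±1-valued Boolean function. -/
def mean (n : ℕ) (f : (Fin n → Bool) → Bool) : ℝ := avg n fun x => toR (f x)

/-- Sign of a real number, as ±1 (with sign(0) = 1). -/
def sgn (e : ℝ) : ℝ := if 0 ≤ e then 1 else -1

/-- Normalized Hamming distance `Pr_x[f(x) ≠ g(x)]` under the uniform distribution. -/
def distB (n : ℕ) (f g : (Fin n → Bool) → Bool) : ℝ :=
  avg n fun x => if f x = g x then 0 else 1

/-- The `p`-noisy copy of `x` determined by the rerandomization pattern `r`
(coordinates where `r i = true` are rerandomized) and fresh bits `z`. -/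
def noisy (n : ℕ) (x r z : Fin n → Bool) : Fin n → Bool := fun i => if r i then z i else x i

/-- Probability of the rerandomization pattern `r` at noise rate `p`. -/
def wt (n : ℕ) (p : ℝ) (r : Fin n → Bool) : ℝ := ∏ i : Fin n, (if r i then p else 1 - p)

/-- Noise sensitivity `NS_p(f) = Pr[f(x) ≠ f(y)]`, `x` uniform, `y` a `p`-noisy copy of `x`. -/
def NS (n : ℕ) (p : ℝ) (f : (Fin n → Bool) → Bool) : ℝ :=
  (∑ x : Fin n → Bool, ∑ r : Fin n → Bool, ∑ z : Fin n → Bool,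
      wt n p r * (if f x = f (noisy n x r z) then 0 else 1)) / (2 ^ n * 2 ^ n)

/-- Restriction `f_{x_i = b}` of `f`, fixing coordinate `i` to `b`. -/
def restr (n : ℕ) (f : (Fin n → Bool) → Bool) (i : Fin n) (b : Bool) :
    (Fin n → Bool) → Bool := fun x => f (Function.update x i b)

/-- `Score_i(f,p) = NS_p(f) − E_b[NS_p(f_{x_i=b})]`. -/
def score (n : ℕ) (p : ℝ) (f : (Fin n → Bool) → Bool) (i : Fin n) : ℝ :=
  NS n p f - (NS n p (restr n f i true) + NS n p (restr n f i false)) / 2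

/-- Discrete derivative `D_i g(x) = (g(x^{i=1}) − g(x^{i=-1}))/2` of a real-valued function. -/
def Dder (n : ℕ) (g : (Fin n → Bool) → ℝ) (i : Fin n) (x : Fin n → Bool) : ℝ :=
  (g (Function.update x i true) - g (Function.update x i false)) / 2

/-- `p`-smoothed version `f̃(x) = E_{y ∼_p x}[f(y)]` of a Boolean function `f`. -/
def smooth (n : ℕ) (p : ℝ) (f : (Fin n → Bool) → Bool) (x : Fin n → Bool) : ℝ :=
  (∑ r : Fin n → Bool, ∑ z : Fin n → Bool, wt n p r * toR (f (noisy n x r z))) / 2 ^ n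

/-- Fourier coefficient `f̂(S) = E[f(x) · χ_S(x)]`. -/
def fourier (n : ℕ) (f : (Fin n → Bool) → Bool) (S : Finset (Fin n)) : ℝ :=
  avg n fun x => toR (f x) * ∏ i ∈ S, toR (x i)

/-- Total influence `Inf(g) = Σ_i Pr[g(x) ≠ g(x^{⊕i})]`. -/
def totalInf (n : ℕ) (g : (Fin n → Bool) → Bool) : ℝ :=
  ∑ i : Fin n, avg n fun x => if g x = g (Function.update x i (!x i)) then 0 else 1

/-- Decision trees over `{-1,1}^n`. -/
inductive DTree (n : ℕ) where
  | leaf : Bool → DTree n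
  | node : Fin n → DTree n → DTree n → DTree n

namespace DTree

def eval {n : ℕ} : DTree n → (Fin n → Bool) → Bool
  | .leaf b, _ => b
  | .node i l r, x => if x i then eval r x else eval l x

/-- Number of leaves (the size of the tree). -/
def leaves {n : ℕ} : DTree n → ℕ
  | .leaf _ => 1
  | .node _ l r => leaves l + leaves r

/-- Depth of the leaf reached by input `x`. -/
def depthOn {n : ℕ} : DTree n → (Fin n → Bool) → ℕ
  | .leaf _, _ => 0
  | .node i l r, x => (if x i then depthOn r x else depthOn l x) + 1

/-- Whether the tree queries variable `i` on input `x`. -/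
def queries {n : ℕ} : DTree n → (Fin n → Bool) → Fin n → Bool
  | .leaf _, _, _ => false
  | .node j l r, x, i => (i == j) || (if x j then queries r x i else queries l x i)

/-- The tree never re-queries a variable already queried on the path
(given the set `s` of forbidden variables). -/
def noRepeat {n : ℕ} : DTree n → Finset (Fin n) → Prop
  | .leaf _, _ => True
  | .node i l r, s => i ∉ s ∧ noRepeat l (insert i s) ∧ noRepeat r (insert i s)

def depth {n : ℕ} : DTree n → ℕ
  | .leaf _ => 0
  | .node _ l r => max (depth l) (depth r) + 1

end DTree

/-- `opt_s(g)`: distance of `g` to the closest decision tree of size at most `s`. -/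
def opt (n : ℕ) (s : ℕ) (g : (Fin n → Bool) → Bool) : ℝ :=
  sInf {e : ℝ | ∃ T : DTree n, T.leaves ≤ s ∧ distB n g T.eval = e}

/-!
Write `F = toR ∘ f` as `F(x) = E_i F(x) + x_i D_i F(x)`, where neither part depends on `x_i`.
In the correlation `E[F(x) F(y)]` the cross terms vanish and `E[x_i y_i] = 1 - p`, while
restricting `x_i = ±1` replaces `x_i y_i` by `1`; hence the average correlation of the two
restrictions exceeds that of `f` by exactly `p · E[D_i F(x) D_i F(y)]`. Since
`NS_p(g) = (1 - E[g(x) g(y)]) / 2`, this is the claimed formula for the score.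
The average over the pair `(x_i, y_i)` is realised by summing over all updates of
coordinate `i` of `x`, of the rerandomization pattern and of the fresh bits.
-/

open Function

theorem sum_sum_update {ι β : Type*} [Fintype ι] [DecidableEq ι] [Fintype β]
    (i : ι) (h : (ι → β) → ℝ) :
    ∑ x : ι → β, ∑ b : β, h (update x i b) = Fintype.card β * ∑ x, h x := by
  let e := Equiv.funSplitAt i β
  have hupd : ∀ (c b : β) (x' : {j // j ≠ i} → β),
      update (e.symm (c, x')) i b = e.symm (b, x') := by
    intro c b x'
    ext j
    by_cases hj : j = i <;> simp [e, hj, Equiv.funSplitAt, Equiv.piSplitAt, update]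
  simp only [← e.symm.sum_comp (fun x => ∑ b, h (update x i b)), ← e.symm.sum_comp h,
    Fintype.sum_prod_type, hupd, sum_const, card_univ, nsmul_eq_mul]
  rw [Finset.sum_comm]

variable {n : ℕ}

lemma noisy_update (x r z : Fin n → Bool) (i : Fin n) (bx br bz : Bool) :
    noisy n (update x i bx) (update r i br) (update z i bz)
      = update (noisy n x r z) i (if br then bz else bx) := by
  ext j
  rcases eq_or_ne j i with rfl | hj <;> simp_all [noisy]

lemma wt_update (p : ℝ) (r : Fin n → Bool) (i : Fin n) (b : Bool) :
    wt n p (update r i b)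
      = (if b then p else 1 - p) * ∏ j ∈ univ.erase i, (if r j then p else 1 - p) := by
  rw [wt, ← mul_prod_erase _ _ (mem_univ i), update_self]
  congr 1
  exact prod_congr rfl fun j hj => by rw [update_of_ne (ne_of_mem_erase hj)]

lemma sum_wt (p : ℝ) : ∑ r, wt n p r = 1 := by
  simp [wt, ← Fintype.prod_sum (fun (_ : Fin n) (b : Bool) => if b then p else 1 - p)]

theorem sum_triple_update (i : Fin n)
    (G : (Fin n → Bool) → (Fin n → Bool) → (Fin n → Bool) → ℝ) :
    ∑ x, ∑ r, ∑ z, ∑ bx, ∑ br, ∑ bz, G (update x i bx) (update r i br) (update z i bz)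
      = 8 * ∑ x, ∑ r, ∑ z, G x r z := by
  calc _ = ∑ x, ∑ bx, ∑ r, ∑ br, ∑ z, ∑ bz,
          G (update x i bx) (update r i br) (update z i bz) := by
        simp only [sum_comm (s := (univ : Finset Bool)) (t := (univ : Finset (Fin n → Bool)))]
    _ = ∑ x, ∑ bx, ∑ r, ∑ br, 2 * ∑ z, G (update x i bx) (update r i br) z := by
        simp only [sum_sum_update i (G _ _), Fintype.card_bool, Nat.cast_ofNat]
    _ = ∑ x, ∑ bx, 2 * (2 * ∑ r, ∑ z, G (update x i bx) r z) := by
        refine sum_congr rfl fun x _ => sum_congr rfl fun bx _ => ?_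
        rw [sum_sum_update i (fun r => 2 * ∑ z, G (update x i bx) r z), ← mul_sum]
        simp
    _ = 8 * ∑ x, ∑ r, ∑ z, G x r z := by
        rw [sum_sum_update i (fun x => 2 * (2 * ∑ r, ∑ z, G x r z))]
        simp only [Fintype.card_bool, Nat.cast_ofNat, ← mul_sum]
        ring

/-- `noiseSum n p Φ = 4ⁿ · E[Φ(x, y)]` for `x` uniform and `y` a `p`-noisy copy of `x`. -/
def noiseSum (n : ℕ) (p : ℝ) (Φ : (Fin n → Bool) → (Fin n → Bool) → ℝ) : ℝ :=
  ∑ x, ∑ r, ∑ z, wt n p r * Φ x (noisy n x r z)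

/-- Joint law of `(x i, y i)`, which is independent of the other coordinates of `x` and `y`;
averaging `Φ` over it in `resample` is conditioning on those coordinates. -/
def pairLaw (p : ℝ) (a b : Bool) : ℝ := if a = b then 1 / 2 - p / 4 else p / 4

def resample (p : ℝ) (i : Fin n) (Φ : (Fin n → Bool) → (Fin n → Bool) → ℝ)
    (x y : Fin n → Bool) : ℝ :=
  ∑ a, ∑ b, pairLaw p a b * Φ (update x i a) (update y i b)

lemma resample_update (p : ℝ) (i : Fin n) (Φ : (Fin n → Bool) → (Fin n → Bool) → ℝ)
    (x y : Fin n → Bool) (a b : Bool) :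
    resample p i Φ (update x i a) (update y i b) = resample p i Φ x y := by
  simp only [resample, update_idem]

theorem noiseSum_resample (p : ℝ) (i : Fin n)
    (Φ : (Fin n → Bool) → (Fin n → Bool) → ℝ) :
    noiseSum n p (resample p i Φ) = noiseSum n p Φ := by
  refine mul_left_cancel₀ (show (8 : ℝ) ≠ 0 by norm_num) ?_
  -- Once coordinate `i` of `x`, `r`, `z` is split off, what is left is an identity between
  -- eight terms for each value of the remaining coordinates.
  simp only [noiseSum, ← sum_triple_update i, noisy_update, wt_update, resample_update]
  refine sum_congr rfl fun x _ => sum_congr rfl fun r _ => sum_congr rfl fun z _ => ?_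
  simp only [Fintype.sum_bool, resample, pairLaw, Bool.false_eq_true, Bool.true_eq_false,
    ↓reduceIte]
  ring

lemma resample_mul_self (p : ℝ) (i : Fin n) (F : (Fin n → Bool) → ℝ)
    (x y : Fin n → Bool) :
    resample p i (fun x y => F x * F y) x y
      = (F (update x i true) * F (update y i true)
          + F (update x i false) * F (update y i false)) / 2
        - p * (Dder n F i x * Dder n F i y) := by
  simp only [resample, pairLaw, Dder, Fintype.sum_bool, Bool.false_eq_true, Bool.true_eq_false,
    ↓reduceIte]
  ring

def corr (n : ℕ) (p : ℝ) (g : (Fin n → Bool) → Bool) : ℝ :=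
  noiseSum n p fun x y => toR (g x) * toR (g y)

theorem corr_eq_restr_sub (p : ℝ) (f : (Fin n → Bool) → Bool) (i : Fin n) :
    corr n p f = (corr n p (restr n f i true) + corr n p (restr n f i false)) / 2
      - p * noiseSum n p fun x y =>
          Dder n (fun y => toR (f y)) i x * Dder n (fun y => toR (f y)) i y := by
  rw [corr, ← noiseSum_resample p i]
  simp only [noiseSum, corr, restr, resample_mul_self, mul_sum, sum_div, ← sum_add_distrib,
    ← sum_sub_distrib]
  refine sum_congr rfl fun x _ => sum_congr rfl fun r _ => sum_congr rfl fun z _ => by ring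

lemma noiseSum_one (p : ℝ) : noiseSum n p (fun _ _ => 1) = 2 ^ n * 2 ^ n := by
  simp [noiseSum, ← mul_sum, sum_wt]

theorem NS_eq_corr (p : ℝ) (g : (Fin n → Bool) → Bool) :
    NS n p g = (1 - corr n p g / (2 ^ n * 2 ^ n)) / 2 := by
  have indicator : ∀ a b : Bool, (if a = b then 0 else 1 : ℝ) = (1 - toR a * toR b) / 2 := by
    intro a b; cases a <;> cases b <;> norm_num [toR]
  calc NS n p g = (noiseSum n p (fun _ _ => 1) - corr n p g) / 2 / (2 ^ n * 2 ^ n) := by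
        simp only [NS, corr, noiseSum, indicator, sum_div, ← sum_sub_distrib]
        refine sum_congr rfl fun x _ => sum_congr rfl fun r _ => sum_congr rfl fun z _ => by ring
    _ = (1 - corr n p g / (2 ^ n * 2 ^ n)) / 2 := by
        rw [noiseSum_one]
        field_simp

theorem stmt7_general (n : ℕ) (p : ℝ)
    (f : (Fin n → Bool) → Bool) (i : Fin n) :
    score n p f i =
      (p / 2) *
        ((∑ x : Fin n → Bool, ∑ r : Fin n → Bool, ∑ z : Fin n → Bool,
            wt n p r *
              (Dder n (fun y => toR (f y)) i x *
                Dder n (fun y => toR (f y)) i (noisy n x r z))) /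
          (2 ^ n * 2 ^ n)) := by
  rw [score, NS_eq_corr, NS_eq_corr, NS_eq_corr, corr_eq_restr_sub p f i, noiseSum]
  ring

/-- `Score_i(f,p) = (p/2)·E_{x,y}[D_i f(x)·D_i f(y)]`,
`y` a `p`-noisy copy of `x`. -/
theorem stmt7 (n : ℕ) (p : ℝ) (hp0 : 0 < p) (hp1 : p < 1)
    (f : (Fin n → Bool) → Bool) (i : Fin n) :
    score n p f i =
      (p / 2) *
        ((∑ x : Fin n → Bool, ∑ r : Fin n → Bool, ∑ z : Fin n → Bool,
            wt n p r *
              (Dder n (fun y => toR (f y)) i x *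
                Dder n (fun y => toR (f y)) i (noisy n x r z))) /
          (2 ^ n * 2 ^ n)) :=
  stmt7_general n p f i

end

end DTR
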